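/- If F : ℝ → ℝ is a C² nonnegative function vanishing only at ±1 and satisfying F''(u) ≥ c·|u|^(p-2) whenever |u| ≥ 1 − δ₀, then there exists a constant c̄_F > 0 such that F(u) ≥ c̄_F·(|u| − 1)² for every u ∈ ℝ. -/

import Mathlib

/-!
Near the wells `±1` Taylor's formula, with `F(±1) = F'(±1) = 0` (they are minima) and
`F'' ≥ c (1 - δ₀)^(p-2)` on `|u| ≥ 1 - δ₀`, gives `F(u) ≥ (c (1 - δ₀)^(p-2) / 2) (|u| - 1)²` for all
`|u| ≥ 1 - δ₀`; the segment from `u` to the nearer well stays in that region. On the compact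
interval `|u| ≤ 1 - δ₀` the continuous function `F` has no zero, so it is bounded below there by
some `ε > 0`, while `(|u| - 1)² ≤ 1`.
-/

open Set

theorem add_deriv_mul_add_le_of_le_iteratedDeriv_two {f : ℝ → ℝ} (hf : ContDiff ℝ 2 f)
    {a x m : ℝ} (hm : ∀ y ∈ uIcc a x, m ≤ iteratedDeriv 2 f y) :
    f a + deriv f a * (x - a) + m / 2 * (x - a) ^ 2 ≤ f x := by
  rcases eq_or_ne a x with rfl | hax
  · simp
  obtain ⟨y, hy, hTaylor⟩ :=
    taylor_mean_remainder_lagrange_iteratedDeriv (n := 1) hax hf.contDiffOn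
  have hderiv : derivWithin f (uIcc a x) a = deriv f a :=
    ((hf.differentiable two_ne_zero) a).derivWithin (uniqueDiffOn_uIcc hax a left_mem_uIcc)
  norm_num [taylorWithinEval_succ, hderiv] at hTaylor
  have := hm y (uIoo_subset_uIcc_self hy)
  nlinarith [sq_nonneg (x - a)]

theorem IsLocalMin.add_mul_sq_le_of_le_iteratedDeriv_two {f : ℝ → ℝ} {a x m : ℝ}
    (hmin : IsLocalMin f a) (hf : ContDiff ℝ 2 f)
    (hm : ∀ y ∈ uIcc a x, m ≤ iteratedDeriv 2 f y) :
    f a + m / 2 * (x - a) ^ 2 ≤ f x := by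
  simpa [hmin.deriv_eq_zero] using add_deriv_mul_add_le_of_le_iteratedDeriv_two hf hm

section DoubleWell

variable {f : ℝ → ℝ} {l m : ℝ}

theorem half_mul_sq_abs_sub_one_le (hf : ContDiff ℝ 2 f) (hnn : ∀ u, 0 ≤ f u)
    (h1 : f 1 = 0) (hm1 : f (-1) = 0) (hl : l ≤ 1)
    (hm : ∀ y, l ≤ |y| → m ≤ iteratedDeriv 2 f y) {u : ℝ} (hu : l ≤ |u|) :
    m / 2 * (|u| - 1) ^ 2 ≤ f u := by
  have hmin : ∀ a, f a = 0 → IsLocalMin f a := fun a ha =>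
    Filter.Eventually.of_forall fun y => ha ▸ hnn y
  rcases le_or_gt 0 u with hu0 | hu0
  · rw [abs_of_nonneg hu0] at hu ⊢
    have := (hmin 1 h1).add_mul_sq_le_of_le_iteratedDeriv_two hf (m := m) (x := u)
      fun y hy => hm y <| le_abs.2 <| Or.inl <| by
        rcases mem_uIcc.1 hy with h | h <;> linarith [h.1]
    linarith
  · rw [abs_of_neg hu0] at hu ⊢
    have := (hmin (-1) hm1).add_mul_sq_le_of_le_iteratedDeriv_two hf (m := m) (x := u)
      fun y hy => hm y <| le_abs.2 <| Or.inr <| by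
        rcases mem_uIcc.1 hy with h | h <;> linarith [h.2]
    nlinarith

theorem exists_pos_le_of_abs_le (hf : Continuous f) (hnn : ∀ u, 0 ≤ f u)
    (hzero : ∀ u, f u = 0 ↔ u = 1 ∨ u = -1) (hl : l < 1) :
    ∃ ε > 0, ∀ u, |u| ≤ l → ε ≤ f u := by
  have hpos : ∀ u ∈ Icc (-l) l, 0 < f u := fun u hu =>
    (hnn u).lt_of_ne' fun h => by
      rcases (hzero u).1 h with rfl | rfl <;> linarith [hu.1, hu.2]
  obtain ⟨ε, hε, hle⟩ := isCompact_Icc.exists_forall_le' hf.continuousOn hpos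
  exact ⟨ε, hε, fun u hu => hle u (abs_le.1 hu)⟩

end DoubleWell

theorem stmt_1_general (F : ℝ → ℝ) (hF : ContDiff ℝ 2 F) (hFnn : ∀ u, 0 ≤ F u)
    (hFzero : ∀ u, F u = 0 ↔ u = 1 ∨ u = -1)
    (δ₀ c p : ℝ) (hδ₀ : δ₀ ∈ Set.Ioo (0:ℝ) 1) (hc : 0 < c) (hp : 3 ≤ p)
    (hF'' : ∀ u : ℝ, 1 - δ₀ ≤ |u| → c * |u| ^ (p - 2) ≤ iteratedDeriv 2 F u) :
    ∃ cbarF > (0:ℝ), ∀ u : ℝ, cbarF * (|u| - 1) ^ 2 ≤ F u := by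
  obtain ⟨hδ0, hδ1⟩ := hδ₀
  set l := 1 - δ₀
  set m := c * l ^ (p - 2)
  have hm0 : 0 < m := mul_pos hc (Real.rpow_pos_of_pos (by linarith) _)
  have hm : ∀ y, l ≤ |y| → m ≤ iteratedDeriv 2 F y := fun y hy =>
    (mul_le_mul_of_nonneg_left (Real.rpow_le_rpow (by linarith) hy (by linarith)) hc.le).trans
      (hF'' y hy)
  obtain ⟨ε, hε, hinner⟩ := exists_pos_le_of_abs_le hF.continuous hFnn hFzero (l := l)
    (by linarith)
  refine ⟨min (m / 2) ε, lt_min (by linarith) hε, fun u => ?_⟩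
  rcases le_or_gt l |u| with hu | hu
  · calc min (m / 2) ε * (|u| - 1) ^ 2 ≤ m / 2 * (|u| - 1) ^ 2 :=
          mul_le_mul_of_nonneg_right (min_le_left _ _) (sq_nonneg _)
      _ ≤ F u := half_mul_sq_abs_sub_one_le hF hFnn ((hFzero 1).2 (.inl rfl))
          ((hFzero (-1)).2 (.inr rfl)) (by linarith) hm hu
  · have hsq : (|u| - 1) ^ 2 ≤ 1 := by nlinarith [abs_nonneg u]
    calc min (m / 2) ε * (|u| - 1) ^ 2 ≤ ε * 1 :=
          mul_le_mul (min_le_right _ _) hsq (sq_nonneg _) hε.le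
      _ ≤ F u := by simpa using hinner u hu.le

theorem stmt_1 (F : ℝ → ℝ) (hF : ContDiff ℝ 2 F) (hFnn : ∀ u, 0 ≤ F u)
    (hFzero : ∀ u, F u = 0 ↔ u = 1 ∨ u = -1)
    (δ₀ c p : ℝ) (hδ₀ : δ₀ ∈ Set.Ioo (0:ℝ) 1) (hc : 0 < c) (hp : 3 ≤ p) (hp' : p < 6)
    (hF'' : ∀ u : ℝ, 1 - δ₀ ≤ |u| → c * |u| ^ (p - 2) ≤ iteratedDeriv 2 F u) :
    ∃ cbarF > (0:ℝ), ∀ u : ℝ, cbarF * (|u| - 1) ^ 2 ≤ F u :=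
  stmt_1_general F hF hFnn hFzero δ₀ c p hδ₀ hc hp hF''
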